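/- arXiv:2202.05260 — 3 statements merged into one kernel-verified Lean document; each statement's English description precedes it below -/
import Mathlib

section
/- Any maximal family $(\alpha_i)_{i \in I}$ of complex numbers of absolute value 1 that are algebraically independent over $\mathbb{Q}$ has cardinality $2^{\aleph_0}$. -/
open Cardinal

/-- Any maximal family of complex numbers of absolute value 1 that are algebraically
independent over `ℚ` has cardinality `2^ℵ₀` (the cardinality of the continuum). -/
theorem stmt_3 (s : Set ℂ)
    (habs : ∀ z ∈ s, ‖z‖ = 1)
    (hind : AlgebraicIndependent ℚ (fun z : s => (z : ℂ)))
    (hmax : ∀ t : Set ℂ, s ⊆ t → (∀ z ∈ t, ‖z‖ = 1) →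
      AlgebraicIndependent ℚ (fun z : t => (z : ℂ)) → t = s) :
    Cardinal.mk s = 2 ^ Cardinal.aleph0 := by
  rw [Cardinal.two_power_aleph0]
  refine le_antisymm (le_trans (Cardinal.mk_le_of_injective Subtype.val_injective)
    (by rw [mk_complex])) ?_
  -- lower bound
  set F := IntermediateField.adjoin ℚ s with hF
  set A := algebraicClosure F ℂ with hA
  -- every unit-norm complex number is algebraic over F
  have hcirc : {z : ℂ | ‖z‖ = 1} ⊆ (A : Set ℂ) := by
    intro z hz1
    by_contra hz
    have htr : Transcendental (Algebra.adjoin ℚ s) z := by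
      rw [SetLike.mem_coe, mem_algebraicClosure_iff] at hz
      intro H
      exact hz (H.tower_top_of_subalgebra_le (IntermediateField.algebra_adjoin_le_adjoin ℚ s))
    have hzs : z ∉ s := by
      intro h
      exact hz (SetLike.mem_coe.2 (mem_algebraicClosure_iff.2
        (isAlgebraic_algebraMap (⟨z, IntermediateField.subset_adjoin ℚ s h⟩ : F))))
    have hins : AlgebraicIndependent ℚ (fun x : ↥(insert z s) => (x : ℂ)) := by
      have h := (hind.option_iff_transcendental z).2 (by rwa [Subtype.range_coe])
      convert h.comp _ (Set.subtypeInsertEquivOption hzs).injective using 1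
      ext x
      by_cases hx : ↑x = z <;> simp [hx, Set.subtypeInsertEquivOption]
    have := hmax (insert z s) (Set.subset_insert z s)
      (fun w hw => by
        rcases hw with rfl | hw
        exacts [hz1, habs w hw]) hins
    exact hzs (this ▸ Set.mem_insert z s)
  -- cardinality bounds
  haveI : NoZeroSMulDivisors ↥F ↥A :=
    inferInstance
  have hAcard : #A ≤ max #F ℵ₀ := Algebra.IsAlgebraic.cardinalMk_le_max F A
  have hFcard : #F ≤ max #s ℵ₀ := by
    refine (IntermediateField.cardinalMk_adjoin_le ℚ s).trans ?_
    refine sup_le (sup_le ?_ le_sup_left) le_sup_right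
    exact Cardinal.mk_le_aleph0.trans le_sup_right
  have hcont : (𝔠 : Cardinal) ≤ #A := by
    have hcc : (𝔠 : Cardinal) ≤ #({z : ℂ | ‖z‖ = 1}) := by
      have hπ := Real.pi_pos
      have hf : ∀ θ : Set.Ico (0:ℝ) (2*Real.pi),
          ‖Complex.exp (θ * Complex.I)‖ = 1 := fun θ =>
        Complex.norm_exp_ofReal_mul_I θ
      have hinj : Function.Injective (fun θ : Set.Ico (0:ℝ) (2*Real.pi) =>
          (⟨Complex.exp (θ * Complex.I), hf θ⟩ : {z : ℂ | ‖z‖ = 1})) := by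
        rintro ⟨a, ha0, ha1⟩ ⟨b, hb0, hb1⟩ h
        simp only [Subtype.mk.injEq] at h
        obtain ⟨n, hn⟩ := (Complex.exp_eq_exp_iff_exists_int).1 h
        have him := congrArg Complex.im hn
        simp [Complex.mul_im, Complex.add_im] at him
        have h1 : (-1:ℝ) < n := by nlinarith
        have h2 : (n:ℝ) < 1 := by nlinarith
        have hn0 : n = 0 := by
          have h1' : (-1:ℤ) < n := by exact_mod_cast h1
          have h2' : n < (1:ℤ) := by exact_mod_cast h2
          omega
        subst hn0
        simp at him
        exact Subtype.ext (by linarith)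
      calc 𝔠 = #(Set.Ico (0:ℝ) (2*Real.pi)) := (Cardinal.mk_Ico_real (by linarith)).symm
        _ ≤ _ := Cardinal.mk_le_of_injective hinj
    exact hcc.trans (Cardinal.mk_le_mk_of_subset hcirc)
  -- conclude
  by_contra hlt
  push_neg at hlt
  have : #A < 𝔠 :=
    lt_of_le_of_lt hAcard (max_lt
      (lt_of_le_of_lt hFcard (max_lt hlt Cardinal.aleph0_lt_continuum))
      Cardinal.aleph0_lt_continuum)
  exact absurd hcont (not_le.2 this)
end

section
/- Let $(\alpha_U)_{U \in \mathcal{G}}$ be a family of algebraically independent complex numbers of absolute value 1 indexed by a set $\mathcal{G}$, and define $\gamma : \mathcal{G}^* \to \mathcal{U}(\mathbb{C}^2)$ as the monoid homomorphism extending $U \mapsto H \cdot \mathrm{diag}(1, \alpha_U)$, where $H = \frac{1}{\sqrt{2}}\begin{pmatrix}1 & 1\\ 1 & -1\end{pmatrix}$. Then $\gamma$ is injective: for any two words $w_1, w_2 \in \mathcal{G}^*$, if $\gamma(w_1) = \gamma(w_2)$ then $w_1 = w_2$. -/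
open Matrix

/-- The Hadamard matrix `H`. -/
noncomputable def Hmat : Matrix (Fin 2) (Fin 2) ℂ :=
  ((Real.sqrt 2 : ℂ))⁻¹ • !![1, 1; 1, -1]

namespace Stmt5Aux

open MvPolynomial

section

variable {G : Type*}

noncomputable def Mg (U : G) : Matrix (Fin 2) (Fin 2) (MvPolynomial G ℚ) :=
  !![1, X U; 1, -X U]

noncomputable def prodM (l : List G) : Matrix (Fin 2) (Fin 2) (MvPolynomial G ℚ) :=
  (l.map Mg).prod

lemma prodM_nil : prodM ([] : List G) = 1 := rfl

lemma prodM_cons (U : G) (l : List G) : prodM (U :: l) = Mg U * prodM l := by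
  simp [prodM]

lemma prodM_concat (l : List G) (U : G) : prodM (l ++ [U]) = prodM l * Mg U := by
  simp [prodM]

lemma tdeg_X_mul (s : G) {p : MvPolynomial G ℚ} (hp : p ≠ 0) :
    (X s * p).totalDegree = p.totalDegree + 1 := by
  apply le_antisymm
  · calc (X s * p).totalDegree ≤ (X s).totalDegree + p.totalDegree := totalDegree_mul _ _
    _ = p.totalDegree + 1 := by rw [totalDegree_X]; omega
  · obtain ⟨b, hb, hb2⟩ := p.support.exists_mem_eq_sup
      (Finset.nonempty_iff_ne_empty.mpr (mt support_eq_empty.mp hp)) (fun m => m.sum fun _ e => e)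
    have hmem : Finsupp.single s 1 + b ∈ (X s * p).support := by
      rw [support_X_mul, Finset.mem_map]
      exact ⟨b, hb, rfl⟩
    have := le_totalDegree hmem
    rw [Finsupp.sum_add_index' (fun _ => rfl) (fun _ _ _ => rfl)] at this
    simp only [Finsupp.sum_single_index] at this
    rw [totalDegree]; rw [hb2]
    omega

lemma add_ne_zero_of_deg_lt {p q : MvPolynomial G ℚ}
    (h : p.totalDegree < q.totalDegree) : p + q ≠ 0 := by
  intro h0
  have hq : q = -p := by linear_combination h0
  rw [hq, totalDegree_neg] at h
  omega

lemma prodM_deg (l : List G) :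
    prodM l 1 1 ≠ 0 ∧ (prodM l 1 1).totalDegree = l.length ∧
      (prodM l 0 1).totalDegree ≤ l.length := by
  induction l with
  | nil => simp [prodM_nil, Matrix.one_apply]
  | cons U l ih =>
    obtain ⟨h1, h2, h3⟩ := ih
    have e1 : prodM (U :: l) 1 1 = prodM l 0 1 + -(X U * prodM l 1 1) := by
      simp [prodM_cons, Matrix.mul_apply, Fin.sum_univ_two, Mg]
    have e0 : prodM (U :: l) 0 1 = prodM l 0 1 + X U * prodM l 1 1 := by
      simp [prodM_cons, Matrix.mul_apply, Fin.sum_univ_two, Mg]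
    have hd : (X U * prodM l 1 1).totalDegree = l.length + 1 := by
      rw [tdeg_X_mul U h1, h2]
    have hlt : (prodM l 0 1).totalDegree < (-(X U * prodM l 1 1)).totalDegree := by
      rw [totalDegree_neg, hd]; omega
    refine ⟨?_, ?_, ?_⟩
    · rw [e1]; exact add_ne_zero_of_deg_lt hlt
    · rw [e1, totalDegree_add_eq_right_of_totalDegree_lt hlt, totalDegree_neg, hd]
      simp
    · rw [e0]
      refine le_trans (totalDegree_add _ _) ?_
      simp only [List.length_cons, max_le_iff]
      exact ⟨by omega, by rw [hd]⟩

variable [DecidableEq G]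

noncomputable def evV (V : G) : MvPolynomial G ℚ →ₐ[ℚ] MvPolynomial G ℚ :=
  aeval (fun W => if W = V then 0 else X W)

noncomputable def vec (V : G) : List G → MvPolynomial G ℚ × MvPolynomial G ℚ
  | [] => (1, -1)
  | U :: l =>
    if U = V then ((vec V l).1, (vec V l).1)
    else ((vec V l).1 + X U * (vec V l).2, (vec V l).1 - X U * (vec V l).2)

lemma vec_ne (V : G) (l : List G) : (vec V l).1 ≠ 0 ∧ (vec V l).2 ≠ 0 ∧
    (vec V l).1.totalDegree = (vec V l).2.totalDegree := by
  induction l with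
  | nil => simp [vec]
  | cons U l ih =>
    obtain ⟨h1, h2, h3⟩ := ih
    by_cases hUV : U = V
    · rw [show vec V (U :: l) = ((vec V l).1, (vec V l).1) from by simp [vec, hUV]]
      exact ⟨h1, h1, rfl⟩
    · have hd : (X U * (vec V l).2).totalDegree = (vec V l).2.totalDegree + 1 :=
        tdeg_X_mul U h2
      have hlt : (vec V l).1.totalDegree < (X U * (vec V l).2).totalDegree := by omega
      have hlt' : (vec V l).1.totalDegree < (-(X U * (vec V l).2)).totalDegree := by
        rwa [totalDegree_neg]
      simp only [vec, hUV, if_false, sub_eq_add_neg]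
      refine ⟨add_ne_zero_of_deg_lt hlt, add_ne_zero_of_deg_lt hlt', ?_⟩
      rw [totalDegree_add_eq_right_of_totalDegree_lt hlt,
        totalDegree_add_eq_right_of_totalDegree_lt hlt', totalDegree_neg]

lemma vec_eq (V : G) (l : List G) :
    vec V l = (evV V (prodM l 0 0 - prodM l 0 1), evV V (prodM l 1 0 - prodM l 1 1)) := by
  induction l with
  | nil => simp [vec, prodM_nil, Matrix.one_apply, evV]
  | cons U l ih =>
    have hX : evV V (X U) = if U = V then 0 else X U := by
      simp [evV]
    have e0 : prodM (U :: l) 0 0 - prodM (U :: l) 0 1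
        = (prodM l 0 0 - prodM l 0 1) + X U * (prodM l 1 0 - prodM l 1 1) := by
      simp [prodM_cons, Matrix.mul_apply, Fin.sum_univ_two, Mg]; ring
    have e1 : prodM (U :: l) 1 0 - prodM (U :: l) 1 1
        = (prodM l 0 0 - prodM l 0 1) - X U * (prodM l 1 0 - prodM l 1 1) := by
      simp [prodM_cons, Matrix.mul_apply, Fin.sum_univ_two, Mg]; ring
    rw [e0, e1]
    simp only [map_add, map_sub, _root_.map_mul, hX]
    simp only [vec]
    rw [ih]
    by_cases hUV : U = V
    · simp only [hUV, if_true, Prod.mk.injEq]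
      constructor <;> · simp only [map_sub]; try ring
    · simp only [hUV, if_false, Prod.mk.injEq]
      constructor <;> · simp only [map_sub]; try ring

lemma prodM_inj : ∀ (n : ℕ) (l1 l2 : List G), l1.length = n → prodM l1 = prodM l2 → l1 = l2 := by
  intro n
  induction n using Nat.strong_induction_on with
  | _ n ih =>
    intro l1 l2 hn h
    have hlen : l1.length = l2.length := by
      have d1 := (prodM_deg l1).2.1
      have d2 := (prodM_deg l2).2.1
      rw [← d1, ← d2, h]
    rcases List.eq_nil_or_concat l1 with rfl | ⟨l1', U, rfl⟩
    · simp only [List.length_nil] at hlen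
      exact (List.length_eq_zero_iff.mp hlen.symm).symm
    · rcases List.eq_nil_or_concat l2 with rfl | ⟨l2', V, rfl⟩
      · simp at hlen
      · simp only [List.concat_eq_append] at h hn hlen ⊢
        rw [prodM_concat, prodM_concat] at h
        have hent : ∀ i j, (prodM l1' * Mg U) i j = (prodM l2' * Mg V) i j :=
          fun i j => by rw [h]
        have hcol0 : ∀ i, prodM l1' i 0 + prodM l1' i 1 = prodM l2' i 0 + prodM l2' i 1 := by
          intro i
          have := hent i 0
          simpa [Matrix.mul_apply, Fin.sum_univ_two, Mg] using this
        have hcol1 : ∀ i, X U * (prodM l1' i 0 - prodM l1' i 1)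
            = X V * (prodM l2' i 0 - prodM l2' i 1) := by
          intro i
          have := hent i 1
          simp [Matrix.mul_apply, Fin.sum_univ_two, Mg] at this
          linear_combination this
        have hUV : U = V := by
          by_contra hUV
          have hXU : evV V (X U) = X U := by simp [evV, hUV]
          have hXV : evV V (X V) = (0 : MvPolynomial G ℚ) := by simp [evV]
          have hz : evV V (prodM l1' 0 0 - prodM l1' 0 1) = 0 := by
            have h' := congrArg (evV V) (hcol1 0)
            rw [_root_.map_mul, _root_.map_mul, hXU, hXV, zero_mul] at h'
            exact (mul_eq_zero.mp h').resolve_left (X_ne_zero U)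
          have hv := (vec_ne V l1').1
          rw [vec_eq V l1'] at hv
          exact hv hz
        subst hUV
        have hd : ∀ i, prodM l1' i 0 - prodM l1' i 1 = prodM l2' i 0 - prodM l2' i 1 :=
          fun i => mul_left_cancel₀ (X_ne_zero U) (hcol1 i)
        have hAB : prodM l1' = prodM l2' := by
          refine Matrix.ext fun i j => ?_
          have h0 : (2 : MvPolynomial G ℚ) * prodM l1' i 0 = 2 * prodM l2' i 0 := by
            linear_combination hcol0 i + hd i
          have h1 : (2 : MvPolynomial G ℚ) * prodM l1' i 1 = 2 * prodM l2' i 1 := by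
            linear_combination hcol0 i - hd i
          fin_cases j
          · exact mul_left_cancel₀ two_ne_zero h0
          · exact mul_left_cancel₀ two_ne_zero h1
        have hlt : l1'.length < n := by
          rw [← hn]; simp
        rw [ih l1'.length hlt l1' l2' rfl hAB]

lemma det_Mg (U : G) : (Mg U).det = (-2 : MvPolynomial G ℚ) * X U := by
  rw [show Mg U = !![1, X U; 1, -X U] from rfl, Matrix.det_fin_two_of]
  ring

lemma det_prodM (l : List G) :
    (prodM l).det = (-2 : MvPolynomial G ℚ) ^ l.length * (l.map X).prod := by
  induction l with
  | nil => simp [prodM_nil]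
  | cons U l ih =>
    rw [prodM_cons, Matrix.det_mul, det_Mg, ih]
    simp only [List.length_cons, List.map_cons, List.prod_cons, pow_succ]
    ring

lemma eval_ones (l : List G) : eval (fun _ => (1 : ℚ)) ((l.map X).prod) = 1 := by
  induction l with
  | nil => simp
  | cons U l ih => simp [ih]

lemma bridge (α : G → ℂ) (l : List G) :
    (l.map (fun U => Hmat * Matrix.diagonal ![1, α U])).prod
      = ((Real.sqrt 2 : ℂ))⁻¹ ^ l.length • (prodM l).map (aeval α) := by
  induction l with
  | nil =>
    simp only [List.map_nil, List.prod_nil, List.length_nil, pow_zero, one_smul, prodM_nil]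
    rw [show ((1 : Matrix (Fin 2) (Fin 2) (MvPolynomial G ℚ))).map (aeval α) = 1 from
      Matrix.map_one _ (map_zero _) (map_one _)]
  | cons U l ih =>
    have hM : Hmat * Matrix.diagonal ![1, α U]
        = ((Real.sqrt 2 : ℂ))⁻¹ • (Mg U).map (aeval α) := by
      refine Matrix.ext fun i j => ?_
      fin_cases i <;> fin_cases j <;>
        simp [Hmat, Mg, Matrix.mul_apply, Fin.sum_univ_two, Matrix.map_apply]
    rw [List.map_cons, List.prod_cons, ih, hM, prodM_cons,
      show ((Mg U * prodM l)).map (aeval α)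
          = (Mg U).map (aeval α) * (prodM l).map (aeval α) from
        Matrix.map_mul (f := (aeval α : MvPolynomial G ℚ →ₐ[ℚ] ℂ).toRingHom)]
    rw [smul_mul_assoc, mul_smul_comm, smul_smul, List.length_cons, pow_succ]
    ring_nf

lemma sqrt2C_ne : ((Real.sqrt 2 : ℂ))⁻¹ ≠ 0 := by
  apply inv_ne_zero
  have : Real.sqrt 2 ≠ 0 := ne_of_gt (Real.sqrt_pos.mpr (by norm_num))
  exact_mod_cast this

lemma sqrt2C_sq : (((Real.sqrt 2 : ℂ))⁻¹) ^ 2 = (2 : ℂ)⁻¹ := by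
  rw [inv_pow]
  congr 1
  rw [show ((Real.sqrt 2 : ℝ) : ℂ) ^ 2 = (((Real.sqrt 2) ^ 2 : ℝ) : ℂ) by push_cast; ring]
  rw [Real.sq_sqrt (by norm_num : (2:ℝ) ≥ 0)]
  norm_num

lemma len_aux (α : G → ℂ) (hind : AlgebraicIndependent ℚ α) (l1 l2 : List G)
    (hpar : (-1 : ℚ) ^ l1.length = (-1 : ℚ) ^ l2.length)
    (h11 : ((Real.sqrt 2 : ℂ))⁻¹ ^ l1.length * aeval α (prodM l1 1 1)
      = ((Real.sqrt 2 : ℂ))⁻¹ ^ l2.length * aeval α (prodM l2 1 1))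
    (hle : l1.length ≤ l2.length) : l2.length = l1.length := by
  set c : ℂ := ((Real.sqrt 2 : ℂ))⁻¹ with hc
  have hiff : Even l1.length ↔ Even l2.length := by
    constructor <;> intro he
    · rw [he.neg_one_pow] at hpar
      exact (neg_one_pow_eq_one_iff_even (by norm_num : (-1:ℚ) ≠ 1)).mp hpar.symm
    · rw [he.neg_one_pow] at hpar
      exact (neg_one_pow_eq_one_iff_even (by norm_num : (-1:ℚ) ≠ 1)).mp hpar
  obtain ⟨m, hm⟩ := (Nat.even_sub hle).mpr hiff.symm
  have hpow : c ^ l2.length = c ^ l1.length * ((2:ℂ)⁻¹) ^ m := by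
    have h1 : l2.length = l1.length + (m + m) := by omega
    have h2 : ((2:ℂ)⁻¹) ^ m = c ^ (m + m) := by
      rw [← sqrt2C_sq, ← hc, ← pow_mul, two_mul]
    rw [h1, pow_add, h2]
  have hcan : aeval α (prodM l1 1 1) = ((2:ℂ)⁻¹) ^ m * aeval α (prodM l2 1 1) := by
    have hcn : c ^ l1.length ≠ 0 := pow_ne_zero _ sqrt2C_ne
    apply mul_left_cancel₀ hcn
    rw [h11, hpow]
    ring
  have hCform : ((2:ℂ)⁻¹) ^ m * aeval α (prodM l2 1 1)
      = aeval α (MvPolynomial.C (((2:ℚ)⁻¹) ^ m) * prodM l2 1 1) := by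
    rw [_root_.map_mul, aeval_C]
    norm_num
  have hpoly : prodM l1 1 1 = MvPolynomial.C (((2:ℚ)⁻¹) ^ m) * prodM l2 1 1 := by
    apply hind
    rw [hcan, hCform]
  have hdeg1 := (prodM_deg l1).2.1
  have hdeg2 := (prodM_deg l2).2.1
  have : (MvPolynomial.C (((2:ℚ)⁻¹) ^ m) * prodM l2 1 1).totalDegree
      = (prodM l2 1 1).totalDegree := by
    rw [← smul_eq_C_mul, totalDegree, totalDegree,
      support_smul_eq (by positivity : ((2:ℚ)⁻¹) ^ m ≠ 0)]
  rw [hpoly, this, hdeg2] at hdeg1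
  omega

lemma par_aux (α : G → ℂ) (hind : AlgebraicIndependent ℚ α) (l1 l2 : List G)
    (hdet : (((Real.sqrt 2 : ℂ))⁻¹ ^ l1.length) ^ 2 * aeval α ((prodM l1).det)
      = (((Real.sqrt 2 : ℂ))⁻¹ ^ l2.length) ^ 2 * aeval α ((prodM l2).det)) :
    (-1 : ℚ) ^ l1.length = (-1 : ℚ) ^ l2.length := by
  set c : ℂ := ((Real.sqrt 2 : ℂ))⁻¹ with hc
  rw [det_prodM, det_prodM] at hdet
  have key : ∀ l : List G, (c ^ l.length) ^ 2
        * aeval α ((-2 : MvPolynomial G ℚ) ^ l.length * (l.map X).prod)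
      = aeval α ((-1 : MvPolynomial G ℚ) ^ l.length * (l.map X).prod) := by
    intro l
    rw [_root_.map_mul, _root_.map_mul, map_pow, map_pow]
    have h2 : aeval α (-2 : MvPolynomial G ℚ) = (-2 : ℂ) := by simp
    have h1 : aeval α (-1 : MvPolynomial G ℚ) = (-1 : ℂ) := by simp
    rw [h1, h2, ← mul_assoc]
    congr 1
    rw [pow_right_comm, sqrt2C_sq, ← mul_pow]
    norm_num
  rw [key, key] at hdet
  have hpoly : (-1 : MvPolynomial G ℚ) ^ l1.length * (l1.map X).prod
      = (-1 : MvPolynomial G ℚ) ^ l2.length * (l2.map X).prod := hind hdet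
  have := congrArg (eval (fun _ => (1 : ℚ))) hpoly
  rw [_root_.map_mul, _root_.map_mul, map_pow, map_pow, eval_ones, eval_ones] at this
  simpa using this


end

end Stmt5Aux

open Stmt5Aux MvPolynomial in
/-- Given a family `(α_U)_{U ∈ 𝒢}` of algebraically independent complex numbers of
absolute value 1, the monoid homomorphism `γ : 𝒢* → 𝓤(ℂ²)` extending
`U ↦ H ⬝ diag(1, α_U)` is injective. -/
theorem stmt_5 {G : Type*} (α : G → ℂ)
    (habs : ∀ U, ‖α U‖ = 1)
    (hind : AlgebraicIndependent ℚ α) :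
    Function.Injective
      ⇑(FreeMonoid.lift (fun U : G => Hmat * Matrix.diagonal ![1, α U])) := by
  classical
  intro w1 w2 h
  rw [FreeMonoid.lift_apply, FreeMonoid.lift_apply, bridge α, bridge α] at h
  set c : ℂ := ((Real.sqrt 2 : ℂ))⁻¹ with hc
  set l1 := FreeMonoid.toList w1 with hl1
  set l2 := FreeMonoid.toList w2 with hl2
  have h11 : c ^ l1.length * aeval α (prodM l1 1 1)
      = c ^ l2.length * aeval α (prodM l2 1 1) := by
    have := congrArg (fun M => M 1 1) h
    simpa [Matrix.smul_apply, Matrix.map_apply, smul_eq_mul] using this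
  have hmapdet : ∀ l : List G, ((prodM l).map (aeval α)).det = aeval α ((prodM l).det) := by
    intro l
    have h' := RingHom.map_det
      ((aeval α : MvPolynomial G ℚ →ₐ[ℚ] ℂ) : MvPolynomial G ℚ →+* ℂ) (prodM l)
    rw [RingHom.mapMatrix_apply] at h'
    exact h'.symm
  have hdet := congrArg Matrix.det h
  rw [Matrix.det_smul, Matrix.det_smul, hmapdet, hmapdet] at hdet
  simp only [Fintype.card_fin] at hdet
  have hpar := par_aux α hind l1 l2 hdet
  have hlen : l1.length = l2.length := by
    rcases le_total l1.length l2.length with hle | hle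
    · exact (len_aux α hind l1 l2 hpar h11 hle).symm
    · exact len_aux α hind l2 l1 hpar.symm h11.symm hle
  rw [hlen] at h
  have hM : (prodM l1).map (aeval α) = (prodM l2).map (aeval α) :=
    smul_right_injective _ (pow_ne_zero l2.length sqrt2C_ne) h
  have hP : prodM l1 = prodM l2 := by
    refine Matrix.ext fun i j => hind ?_
    simpa [Matrix.map_apply] using congrArg (fun M => M i j) hM
  have : l1 = l2 := prodM_inj l1.length l1 l2 rfl hP
  exact FreeMonoid.toList.injective this
end

section
/- Let $\mathcal{H}$ be an infinite-dimensional complex Hilbert space. Then the cardinality of the group $\mathcal{U}(\mathcal{H})$ of unitary operators on $\mathcal{H}$ is $\max(2^{\aleph_0}, 2^{\dim(\mathcal{H})})$. -/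
universe u

open Cardinal

section diag
variable {ι : Type u}

lemma memℓp_two_of_norm_eq {f g : ι → ℂ} (h : ∀ i, ‖g i‖ = ‖f i‖) (hf : Memℓp f 2) :
    Memℓp g 2 := by
  apply memℓp_gen
  have hp : (0:ℝ) < (2 : ENNReal).toReal := by norm_num
  have := hf.summable hp
  simpa [h] using this

/-- Diagonal multiplication by a pointwise involution of norm one, as a linear isometry
equivalence of `ℓ²(ι, ℂ)`. -/
noncomputable def diagEquiv (ε : ι → ℂ) (hε : ∀ i, ‖ε i‖ = 1)
    (hinv : ∀ i, ε i * ε i = 1) : lp (fun _ : ι => ℂ) 2 ≃ₗᵢ[ℂ] lp (fun _ : ι => ℂ) 2 := by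
  have mem : ∀ f : lp (fun _ : ι => ℂ) 2, Memℓp (fun i => ε i * f i) 2 := fun f =>
    memℓp_two_of_norm_eq (fun i => by simp [hε i]) (lp.memℓp f)
  refine
  { toFun := fun f => ⟨fun i => ε i * f i, mem f⟩
    invFun := fun f => ⟨fun i => ε i * f i, mem f⟩
    map_add' := ?_
    map_smul' := ?_
    left_inv := ?_
    right_inv := ?_
    norm_map' := ?_ }
  · intro f g; apply lp.ext; funext i
    simp [lp.coeFn_add, mul_add]; rfl
  · intro c f; apply lp.ext; funext i
    simp [lp.coeFn_smul, smul_eq_mul]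
    ring_nf
  · intro f; apply lp.ext; funext i
    simp [← mul_assoc, hinv i]
  · intro f; apply lp.ext; funext i
    simp [← mul_assoc, hinv i]
  · intro f
    have hp : (0:ℝ) < (2 : ENNReal).toReal := by norm_num
    rw [lp.norm_eq_tsum_rpow hp, lp.norm_eq_tsum_rpow hp]
    congr 1
    apply tsum_congr
    intro i
    congr 1
    simp [hε i]

end diag

/-- For an infinite-dimensional complex Hilbert space `H` (with a Hilbert basis indexed
by an infinite type `ι`, so `dim H = #ι`), the cardinality of the group of unitary
operators on `H` is `max(2^ℵ₀, 2^{dim H})`. -/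
theorem stmt_15 {H : Type u} [NormedAddCommGroup H] [InnerProductSpace ℂ H]
    [CompleteSpace H] {ι : Type u} (b : HilbertBasis ι ℂ H) [Infinite ι] :
    Cardinal.mk (unitary (H →L[ℂ] H))
      = max (2 ^ Cardinal.aleph0) (2 ^ Cardinal.mk ι) := by
  classical
  have hι : Cardinal.aleph0 ≤ #ι := aleph0_le_mk ι
  have hmax : max ((2:Cardinal) ^ Cardinal.aleph0) (2 ^ #ι) = 2 ^ #ι :=
    max_eq_right (power_le_power_left two_ne_zero hι)
  rw [hmax]
  -- reduce to linear isometry equivs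
  have hcongr : #(unitary (H →L[ℂ] H)) = #(H ≃ₗᵢ[ℂ] H) :=
    Cardinal.mk_congr (Unitary.linearIsometryEquiv (𝕜 := ℂ) (H := H)).toEquiv
  rw [hcongr]
  apply le_antisymm
  · -- upper bound
    have h1 : #(H ≃ₗᵢ[ℂ] H) ≤ #(ι → H) := by
      apply Cardinal.mk_le_of_injective (f := fun (e : H ≃ₗᵢ[ℂ] H) (i : ι) => e (b i))
      intro e e' h
      have hd : Dense ((Submodule.span ℂ (Set.range b) : Submodule ℂ H) : Set H) := by
        rw [Submodule.dense_iff_topologicalClosure_eq_top]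
        exact b.dense_span
      have heq : Set.EqOn (⇑e) (⇑e')
          ((Submodule.span ℂ (Set.range b) : Submodule ℂ H) : Set H) := by
        have := LinearMap.eqOn_span (R := ℂ) (M := H)
          (f := e.toLinearEquiv.toLinearMap) (g := e'.toLinearEquiv.toLinearMap)
          (s := Set.range b) ?_
        · exact this
        · rintro _ ⟨i, rfl⟩
          exact congrFun h i
      have : (⇑e : H → H) = ⇑e' :=
        Continuous.ext_on hd e.continuous e'.continuous heq
      ext x
      exact congrFun this x
    have h2 : #H ≤ (2:Cardinal) ^ #ι := by
      have : #H ≤ #(ι → ℂ) := by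
        apply Cardinal.mk_le_of_injective
          (f := fun x : H => ((b.repr x : ∀ _ : ι, ℂ)))
        intro x y h
        exact b.repr.injective (lp.ext h)
      calc #H ≤ #(ι → ℂ) := this
        _ = Cardinal.lift.{u} #ℂ ^ Cardinal.lift.{0} #ι := Cardinal.mk_arrow ι ℂ
        _ = Cardinal.continuum ^ #ι := by
            rw [mk_complex, Cardinal.lift_continuum, Cardinal.lift_uzero]
        _ = ((2:Cardinal) ^ Cardinal.aleph0) ^ #ι := by
            rw [Cardinal.two_power_aleph0]
        _ = (2:Cardinal) ^ (Cardinal.aleph0 * #ι) := by rw [← Cardinal.power_mul]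
        _ = (2:Cardinal) ^ #ι := by
            rw [Cardinal.aleph0_mul_eq hι]
    calc #(H ≃ₗᵢ[ℂ] H) ≤ #(ι → H) := h1
      _ = #H ^ #ι := by rw [Cardinal.power_def]
      _ ≤ ((2:Cardinal) ^ #ι) ^ #ι := Cardinal.power_le_power_right h2
      _ = (2:Cardinal) ^ (#ι * #ι) := by rw [Cardinal.power_mul]
      _ = (2:Cardinal) ^ #ι := by rw [Cardinal.mul_eq_self hι]
  · -- lower bound: inject `Set ι`
    rw [← Cardinal.mk_set]
    apply Cardinal.mk_le_of_injective
      (f := fun s : Set ι =>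
        b.repr.trans ((diagEquiv (fun i => if i ∈ s then (1:ℂ) else -1)
          (fun i => by by_cases h : i ∈ s <;> simp [h])
          (fun i => by by_cases h : i ∈ s <;> simp [h])).trans b.repr.symm))
    intro s t h
    have key : ∀ (u : Set ι) (i : ι),
        (b.repr.trans ((diagEquiv (fun i => if i ∈ u then (1:ℂ) else -1)
          (fun i => by by_cases h : i ∈ u <;> simp [h])
          (fun i => by by_cases h : i ∈ u <;> simp [h])).trans b.repr.symm)) (b i)
          = (if i ∈ u then (1:ℂ) else -1) • b i := by
      intro u i
      set ε : ι → ℂ := fun i => if i ∈ u then (1:ℂ) else -1 with hεdef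
      have h1 : (diagEquiv ε (fun i => by by_cases h : i ∈ u <;> simp [ε, h])
          (fun i => by by_cases h : i ∈ u <;> simp [ε, h])) (lp.single 2 i (1:ℂ))
          = ε i • lp.single 2 i (1:ℂ) := by
        apply lp.ext
        funext j
        show ε j * (lp.single 2 i (1:ℂ) : ∀ _ : ι, ℂ) j
          = (ε i • lp.single 2 i (1:ℂ) : lp (fun _ : ι => ℂ) 2) j
        rw [lp.coeFn_smul]
        by_cases hj : j = i
        · subst hj; simp [lp.single_apply]
        · simp [lp.single_apply, hj]
      rw [LinearIsometryEquiv.trans_apply, LinearIsometryEquiv.trans_apply, b.repr_self,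
        h1, map_smul, b.repr_symm_single]
    ext i
    have hs := key s i
    have ht := key t i
    have h' : (b.repr.trans ((diagEquiv (fun i => if i ∈ s then (1:ℂ) else -1)
          (fun i => by by_cases h : i ∈ s <;> simp [h])
          (fun i => by by_cases h : i ∈ s <;> simp [h])).trans b.repr.symm))
        = (b.repr.trans ((diagEquiv (fun i => if i ∈ t then (1:ℂ) else -1)
          (fun i => by by_cases h : i ∈ t <;> simp [h])
          (fun i => by by_cases h : i ∈ t <;> simp [h])).trans b.repr.symm)) := h
    rw [h'] at hs
    have : (if i ∈ s then (1:ℂ) else -1) • b i = (if i ∈ t then (1:ℂ) else -1) • b i := by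
      rw [← hs, ← ht]
    have hb : b i ≠ 0 := b.orthonormal.ne_zero i
    have hcoef : (if i ∈ s then (1:ℂ) else -1) = (if i ∈ t then (1:ℂ) else -1) :=
      smul_left_injective ℂ hb this
    by_cases h1 : i ∈ s <;> by_cases h2 : i ∈ t
    · simp [h1, h2]
    · rw [if_pos h1, if_neg h2] at hcoef; norm_num at hcoef
    · rw [if_neg h1, if_pos h2] at hcoef; norm_num at hcoef
    · simp [h1, h2]
end
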